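/- arXiv:2209.07986 — 6 statements merged into one kernel-verified Lean document; each statement's English description precedes it below -/
import Mathlib

section
/- In a right near-domain, the element r(y,z) from axiom A6 satisfies r(y,z) = E(L(z)−y)·L(y+z) whenever y+z ≠ 0, where E is group inversion and L(x) = 0−x. -/
/-- A right near-domain, totalized: the partial operations
`(+), (−) : B × B₁ → B`, `(·) : B × B₁ → B` and inversion on `B₁ = B \ {0}`
are modeled as total functions whose axioms are guarded by `≠ zero`
hypotheses. -/
structure RightNearDomain (B : Type*) where
  zero : B
  e : B
  add : B → B → B
  sub : B → B → B
  mul : B → B → B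
  inv : B → B
  e_ne_zero : e ≠ zero
  A1 : ∀ x y, y ≠ zero → add (sub x y) y = x
  A2 : ∀ x y, y ≠ zero → sub (add x y) y = x
  A3 : ∀ x, x ≠ zero → sub x x = zero
  mul_ne_zero : ∀ x y, x ≠ zero → y ≠ zero → mul x y ≠ zero
  inv_ne_zero : ∀ x, x ≠ zero → inv x ≠ zero
  mul_assoc : ∀ x y z, y ≠ zero → z ≠ zero → mul (mul x y) z = mul x (mul y z)
  one_mul : ∀ x, x ≠ zero → mul e x = x
  mul_one : ∀ x, mul x e = x
  inv_mul : ∀ x, x ≠ zero → mul (inv x) x = e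
  mul_inv : ∀ x, x ≠ zero → mul x (inv x) = e
  A5 : ∀ y z, y ≠ zero → z ≠ zero →
    ∃ h, h ≠ zero ∧ ∀ x, mul (add x y) z = add (mul x h) (mul y z)
  A6 : ∀ y z, y ≠ zero → z ≠ zero → add y z ≠ zero →
    ∃ r, r ≠ zero ∧ ∀ x, add (add x y) z = add (mul x r) (add y z)
  A7 : ∀ z, z ≠ zero →
    ∃ v, v ≠ zero ∧ ∀ x, add (add x (sub zero z)) z = mul x v

/-- In a right near-domain, the element `r(y,z)` of axiom A6 equals
`E(L(z) − y)·L(y+z)` whenever `y + z ≠ 0`, where `L(x) = 0 − x` and `E` is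
group inversion (assuming `L(z) − y` and `L(y+z)` lie in `B₁`). -/
theorem rightNearDomain_r_eq {B : Type*} (D : RightNearDomain B)
    (y z : B) (hy : y ≠ D.zero) (hz : z ≠ D.zero)
    (hyz : D.add y z ≠ D.zero)
    (h1 : D.sub (D.sub D.zero z) y ≠ D.zero)
    (h2 : D.sub D.zero (D.add y z) ≠ D.zero)
    (r : B) (hr : r ≠ D.zero)
    (hA6 : ∀ x, D.add (D.add x y) z = D.add (D.mul x r) (D.add y z)) :
    r = D.mul (D.inv (D.sub (D.sub D.zero z) y)) (D.sub D.zero (D.add y z)) := by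
  set x := D.sub (D.sub D.zero z) y with hx
  have key := hA6 x
  rw [D.A1 _ _ hy, D.A1 D.zero z hz] at key
  -- key : D.zero = D.add (D.mul x r) (D.add y z)
  have hmul : D.mul x r = D.sub D.zero (D.add y z) := by
    have := D.A2 (D.mul x r) (D.add y z) hyz
    rw [← key] at this
    exact this.symm
  have := D.mul_assoc (D.inv x) x r h1 hr
  rw [D.inv_mul x h1, D.one_mul r hr, hmul] at this
  exact this
end

section
/- In a right near-domain, subtraction is expressed by x − z = x·E(v(z)) + L(z) for all x ∈ B and z ∈ B₁, where v(z) is the element from axiom A7, E is inversion, and L(z) = 0−z. -/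
/-- In a right near-domain, `x − z = x·E(v(z)) + L(z)` for all `x ∈ B` and
`z ∈ B₁`, where `v(z)` is the element from axiom A7, `E` is inversion and
`L(z) = 0 − z`. -/
theorem rightNearDomain_sub_eq {B : Type*} (D : RightNearDomain B)
    (z : B) (hz : z ≠ D.zero)
    (v : B) (hv : v ≠ D.zero)
    (hA7 : ∀ x, D.add (D.add x (D.sub D.zero z)) z = D.mul x v) :
    ∀ x, D.sub x z = D.add (D.mul x (D.inv v)) (D.sub D.zero z) := by
  intro x
  have key : D.add (D.add (D.mul x (D.inv v)) (D.sub D.zero z)) z = x := by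
    rw [hA7, D.mul_assoc x (D.inv v) v (D.inv_ne_zero v hv) hv, D.inv_mul v hv,
      D.mul_one]
  calc D.sub x z
      = D.sub (D.add (D.add (D.mul x (D.inv v)) (D.sub D.zero z)) z) z := by rw [key]
    _ = D.add (D.mul x (D.inv v)) (D.sub D.zero z) := D.A2 _ z hz
end

section
/- In a right near-domain, v(z) = E(L(L(z)))·z for all z ∈ B₁, where v(z) is from axiom A7, L(x) = 0−x and E is inversion. -/
/-- In a right near-domain, `v(z) = E(L(L(z)))·z` for all `z ∈ B₁`, where
`v(z)` is from axiom A7, `L(x) = 0 − x` and `E` is inversion. -/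
theorem rightNearDomain_v_eq {B : Type*} (D : RightNearDomain B)
    (z : B) (hz : z ≠ D.zero)
    (v : B) (hv : v ≠ D.zero)
    (hA7 : ∀ x, D.add (D.add x (D.sub D.zero z)) z = D.mul x v) :
    v = D.mul (D.inv (D.sub D.zero (D.sub D.zero z))) z := by
  -- zero_add lemma: add 0 y = y for y ≠ 0
  have zero_add : ∀ y, y ≠ D.zero → D.add D.zero y = y := by
    intro y hy
    have h1 := D.A1 y y hy
    rwa [D.A3 y hy] at h1
  -- L z ≠ 0
  have hLz : D.sub D.zero z ≠ D.zero := by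
    intro h
    have h1 := D.A1 D.zero z hz
    rw [h, zero_add z hz] at h1
    exact hz h1
  -- w = L (L z) ≠ 0
  set w := D.sub D.zero (D.sub D.zero z) with hw
  have hwne : w ≠ D.zero := by
    intro h
    have h1 := D.A1 D.zero (D.sub D.zero z) hLz
    rw [← hw, h, zero_add _ hLz] at h1
    exact hLz h1
  -- plug x = w into hA7
  have key := hA7 w
  rw [hw] at key
  rw [D.A1 D.zero (D.sub D.zero z) hLz, zero_add z hz] at key
  -- key : z = mul w v
  have := congrArg (D.mul (D.inv w)) key.symm
  rwa [← D.mul_assoc (D.inv w) w v hwne hv, D.inv_mul w hwne,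
    D.one_mul v hv] at this
end

section
/- In a right near-domain, the identity (x+z) − (y+z) = (x−y)·(L(z)−y)⁻¹·L(y+z) holds for all x ∈ B and y,z ∈ B₁ with y ≠ L(z), provided the indicated expressions lie in B₁, where L(t) = 0−t. -/
/-- In a right near-domain, `(x+z) − (y+z) = (x−y)·(L(z)−y)⁻¹·L(y+z)` for all
`x ∈ B` and `y, z ∈ B₁` with `y ≠ L(z)`, provided the indicated expressions
lie in `B₁`, where `L(t) = 0 − t`. -/
theorem rightNearDomain_sub_add {B : Type*} (D : RightNearDomain B)
    (x y z : B) (hy : y ≠ D.zero) (hz : z ≠ D.zero)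
    (hne : y ≠ D.sub D.zero z)
    (hyz : D.add y z ≠ D.zero)
    (h1 : D.sub (D.sub D.zero z) y ≠ D.zero)
    (h2 : D.sub D.zero (D.add y z) ≠ D.zero) :
    D.sub (D.add x z) (D.add y z)
      = D.mul (D.mul (D.sub x y) (D.inv (D.sub (D.sub D.zero z) y)))
          (D.sub D.zero (D.add y z)) := by
  obtain ⟨r, hr, hA6⟩ := D.A6 y z hy hz hyz
  set w := D.sub (D.sub D.zero z) y with hw
  -- determine r
  have hwy : D.add w y = D.sub D.zero z := D.A1 _ _ hy
  have hLz : D.add (D.sub D.zero z) z = D.zero := D.A1 _ _ hz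
  have key : D.add (D.mul w r) (D.add y z) = D.zero := by
    rw [← hA6 w, hwy, hLz]
  have hwr : D.mul w r = D.sub D.zero (D.add y z) := by
    have := D.A2 (D.mul w r) (D.add y z) hyz
    rw [key] at this
    exact this.symm
  have hrval : r = D.mul (D.inv w) (D.sub D.zero (D.add y z)) := by
    rw [← hwr, ← D.mul_assoc _ _ _ h1 hr, D.inv_mul _ h1, D.one_mul _ hr]
  have e1 : D.add x z = D.add (D.mul (D.sub x y) r) (D.add y z) := by
    conv_lhs => rw [← D.A1 x y hy]
    exact hA6 _
  rw [e1, D.A2 _ _ hyz, hrval,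
    ← D.mul_assoc _ _ _ (D.inv_ne_zero _ h1) h2]
end

section
/- In a right near-domain with L(e) ∈ B₁ and a := 0−e ∈ B₁, the map φ(x) = x·a + e is an involution of B: φ(φ(x)) = x for all x ∈ B; moreover φ(e) = 0 and φ(0) = e. -/
/-- In a right near-domain with `a := 0 − e ∈ B₁`, the map `φ(x) = x·a + e`
is an involution of `B` with `φ(e) = 0` and `φ(0) = e`. -/
theorem rightNearDomain_phi_involutive {B : Type*} (D : RightNearDomain B)
    (ha : D.sub D.zero D.e ≠ D.zero) :
    (∀ x, D.add (D.mul (D.add (D.mul x (D.sub D.zero D.e)) D.e)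
        (D.sub D.zero D.e)) D.e = x)
    ∧ D.add (D.mul D.e (D.sub D.zero D.e)) D.e = D.zero
    ∧ D.add (D.mul D.zero (D.sub D.zero D.e)) D.e = D.e := by
  set a := D.sub D.zero D.e with hadef
  -- mul zero x = zero for x ≠ 0
  have hzero_mul : ∀ x, x ≠ D.zero → D.mul D.zero x = D.zero := by
    intro x hx
    by_contra h
    have h1 := D.mul_assoc D.zero x (D.inv x) hx (D.inv_ne_zero x hx)
    rw [D.mul_inv x hx, D.mul_one] at h1
    exact D.mul_ne_zero _ _ h (D.inv_ne_zero x hx) h1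
  have hzae : D.add D.zero D.e = D.e := by
    have := D.A1 D.e D.e D.e_ne_zero
    rwa [D.A3 D.e D.e_ne_zero] at this
  have hphi0 : D.add (D.mul D.zero a) D.e = D.e := by
    rw [hzero_mul a ha, hzae]
  have hphie : D.add (D.mul D.e a) D.e = D.zero := by
    rw [D.one_mul a ha, hadef, D.A1 D.zero D.e D.e_ne_zero]
  refine ⟨?_, hphie, hphi0⟩
  obtain ⟨h, hh, hA5⟩ := D.A5 D.e a D.e_ne_zero ha
  obtain ⟨v, hv, hA7⟩ := D.A7 D.e D.e_ne_zero
  have hA7' : ∀ u, D.add (D.add u a) D.e = D.mul u v := by rw [hadef]; exact hA7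
  -- φφ(x) = x·(a·(h·v))
  have key : ∀ x, D.add (D.mul (D.add (D.mul x a) D.e) a) D.e
      = D.mul x (D.mul a (D.mul h v)) := by
    intro x
    rw [hA5 (D.mul x a), D.one_mul a ha, hA7' (D.mul (D.mul x a) h),
      D.mul_assoc x a h ha hh, D.mul_assoc x (D.mul a h) v (D.mul_ne_zero a h ha hh) hv,
      D.mul_assoc a h v hh hv]
  have keye := key D.e
  rw [hphie, hphi0, D.one_mul _ (D.mul_ne_zero a _ ha (D.mul_ne_zero h v hh hv))] at keye
  intro x
  rw [key x, ← keye, D.mul_one]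
end

section
/- Let T be a sharply 2-transitive group of permutations of a set B, and fix distinct e₁, e₂ ∈ B. Identify each g ∈ T with the pair [x₁,x₂] := (g(e₁), g(e₂)). Define B₁ := {x ∈ B : [x,e₂] ∈ T} and φ(x) := the image of x under the involution [e₂,e₁]. Then φ satisfies φ(φ(t)·φ(x)) = φ(t·φ(x⁻¹))·x for all t ∈ B and x ∈ B₁ \ {e₁}, where the product on B₁ is induced from composition via [x,e₂]·[y,e₂] corresponding to the group product, extended by e₂·y = e₂. -/
/-- Let `T` be a sharply 2-transitive group of permutations of `B` and
`e₁ ≠ e₂`. Identifying `g ∈ T` with the pair `(g e₁, g e₂)`, let `σ ∈ T` be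
the involution `[e₂,e₁]` and set `φ(x) := σ x`. For `x ∈ B₁ \ {e₁}` — i.e.
`x = g e₁` for some `g ∈ T` fixing `e₂` — with `g'` and `k` the stabilizer
elements representing `[φ(x), e₂]` and `[φ(x⁻¹), e₂]` (where `x⁻¹ = g⁻¹ e₁`),
the identity `φ(φ(t)·φ(x)) = φ(t·φ(x⁻¹))·x` holds for all `t ∈ B`, where
`t·y` denotes the application to `t` of the stabilizer element representing
`[y, e₂]`. -/
theorem sharply2Transitive_phi_identity {B : Type*}
    (T : Subgroup (Equiv.Perm B))
    (hT : ∀ a₁ a₂ b₁ b₂ : B, a₁ ≠ a₂ → b₁ ≠ b₂ →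
      ∃! g : Equiv.Perm B, g ∈ T ∧ g a₁ = b₁ ∧ g a₂ = b₂)
    (e₁ e₂ : B) (he : e₁ ≠ e₂)
    (σ : Equiv.Perm B) (hσT : σ ∈ T) (hσ₁ : σ e₁ = e₂) (hσ₂ : σ e₂ = e₁)
    -- `x ∈ B₁ \ {e₁}`, represented by the stabilizer element `g = [x, e₂]`:
    (x : B) (hx : x ≠ e₁)
    (g : Equiv.Perm B) (hgT : g ∈ T) (hg₁ : g e₁ = x) (hg₂ : g e₂ = e₂)
    -- the stabilizer element `g' = [φ(x), e₂]`:
    (g' : Equiv.Perm B) (hg'T : g' ∈ T) (hg'₁ : g' e₁ = σ x) (hg'₂ : g' e₂ = e₂)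
    -- the stabilizer element `k = [φ(x⁻¹), e₂]`, where `x⁻¹ = g⁻¹ e₁`:
    (k : Equiv.Perm B) (hkT : k ∈ T) (hk₁ : k e₁ = σ (g⁻¹ e₁)) (hk₂ : k e₂ = e₂) :
    ∀ t : B, σ (g' (σ t)) = g (σ (k t)) := by
  -- σ is an involution
  have hσ2 : σ * σ = 1 := by
    obtain ⟨u, -, huniq⟩ := hT e₁ e₂ e₁ e₂ he he
    have h1 := huniq (σ * σ) ⟨mul_mem hσT hσT, by
      simp [Equiv.Perm.mul_apply, hσ₁, hσ₂]⟩
    have h2 := huniq 1 ⟨one_mem T, by simp⟩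
    rw [h1, h2]
  have hσσ : ∀ y : B, σ (σ y) = y := by
    intro y
    have := congrArg (fun f : Equiv.Perm B => f y) hσ2
    simpa [Equiv.Perm.mul_apply] using this
  have hne : e₁ ≠ x := fun h => hx h.symm
  obtain ⟨u, -, huniq⟩ := hT e₁ e₂ e₁ x he hne
  have h1 := huniq (σ * g' * σ) ⟨mul_mem (mul_mem hσT hg'T) hσT, by
    constructor
    · simp [Equiv.Perm.mul_apply, hσ₁, hg'₂, hσ₂]
    · simp [Equiv.Perm.mul_apply, hσ₂, hg'₁, hσσ]⟩
  have h2 := huniq (g * σ * k) ⟨mul_mem (mul_mem hgT hσT) hkT, by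
    constructor
    · simp [Equiv.Perm.mul_apply, hk₁, hσσ]
    · simp [Equiv.Perm.mul_apply, hk₂, hσ₂, hg₁]⟩
  have heq : σ * g' * σ = g * σ * k := by rw [h1, h2]
  intro t
  have := congrArg (fun f : Equiv.Perm B => f t) heq
  simpa [Equiv.Perm.mul_apply] using this
end
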